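/- Let λ > 0, C, D > 0, E ≠ 0, and N = {(v,w) ∈ ℝ³ × ℝ³ : ⟨v,w⟩ = E, (1-|v|²)√(λ+|w|²) = √C+√D}. Define f(r) = √(1-(√C+√D)/√(λ+r²)) on (c₀,∞), where c₀ = max(0, √((√C+√D)²-λ)) (interpreted as 0 when (√C+√D)² ≤ λ). Then for every (v,w) ∈ N one has v ≠ 0, w ≠ 0, and |v| = f(|w|); the function r ↦ r f(r) is a strictly increasing bijection from (c₀,∞) to (0,∞); and the map Φ(v,w) = (v/|v|, w - (E/|v|²)v) is a homeomorphism from N onto TS². -/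

import Mathlib

open scoped RealInnerProductSpace
open Real

/-- `N = {(v,w) ∈ ℝ³ × ℝ³ : ⟨v,w⟩ = E, (1-|v|²)√(λ+|w|²) = √C + √D}`. -/
def NSetE (lam C D E : ℝ) : Set (EuclideanSpace ℝ (Fin 3) × EuclideanSpace ℝ (Fin 3)) :=
  {p | ⟪p.1, p.2⟫ = E ∧ (1 - ‖p.1‖ ^ 2) * Real.sqrt (lam + ‖p.2‖ ^ 2) =
    Real.sqrt C + Real.sqrt D}

/-- `TS² = {(v,w) ∈ S² × ℝ³ : ⟨v,w⟩ = 0}`. -/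
def TS2 : Set (EuclideanSpace ℝ (Fin 3) × EuclideanSpace ℝ (Fin 3)) :=
  {p | ‖p.1‖ = 1 ∧ ⟪p.1, p.2⟫ = 0}

/-- `f(r) = √(1 - (√C+√D)/√(λ+r²))`. -/
noncomputable def fCD (lam C D r : ℝ) : ℝ :=
  Real.sqrt (1 - (Real.sqrt C + Real.sqrt D) / Real.sqrt (lam + r ^ 2))

/-- `c₀ = √((√C+√D)² - λ)` (which is `0` when `(√C+√D)² ≤ λ`). -/
noncomputable def cZero (lam C D : ℝ) : ℝ :=
  Real.sqrt ((Real.sqrt C + Real.sqrt D) ^ 2 - lam)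

open Real Set

namespace NProof

variable {lam S : ℝ}

lemma sqrt_lam_pos (hlam : 0 < lam) (r : ℝ) : 0 < Real.sqrt (lam + r ^ 2) :=
  Real.sqrt_pos.2 (by positivity)

lemma sq_lt_of_c0 (hlam : 0 < lam) {r : ℝ} (hr : Real.sqrt (S ^ 2 - lam) < r) :
    S ^ 2 < lam + r ^ 2 := by
  rcases le_or_gt (S ^ 2) lam with h | h
  · have hr0 : 0 < r := lt_of_le_of_lt (Real.sqrt_nonneg _) hr
    nlinarith
  · have h0 : S ^ 2 - lam < r ^ 2 := by
      have hrpos : 0 < r := lt_of_le_of_lt (Real.sqrt_nonneg _) hr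
      exact (Real.sqrt_lt' hrpos).1 hr
    linarith

lemma S_lt_sqrt (hlam : 0 < lam) (hS : 0 < S) {r : ℝ}
    (hr : Real.sqrt (S ^ 2 - lam) < r) : S < Real.sqrt (lam + r ^ 2) :=
  (Real.lt_sqrt hS.le).2 (sq_lt_of_c0 hlam hr)

lemma inner_term_pos (hlam : 0 < lam) (hS : 0 < S) {r : ℝ}
    (hr : Real.sqrt (S ^ 2 - lam) < r) :
    0 < 1 - S / Real.sqrt (lam + r ^ 2) := by
  have h := S_lt_sqrt hlam hS hr
  have h2 := sqrt_lam_pos hlam r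
  have : S / Real.sqrt (lam + r ^ 2) < 1 := (div_lt_one h2).2 h
  linarith

lemma inner_term_lt_one (hS : 0 < S) (hlam : 0 < lam) (r : ℝ) :
    1 - S / Real.sqrt (lam + r ^ 2) < 1 := by
  have h2 := sqrt_lam_pos hlam r
  have : 0 < S / Real.sqrt (lam + r ^ 2) := div_pos hS h2
  linarith

end NProof

namespace NProof

/-- abstract version of `fCD`. -/
noncomputable def fS (lam S r : ℝ) : ℝ :=
  Real.sqrt (1 - S / Real.sqrt (lam + r ^ 2))

/-- abstract version of `cZero`. -/
noncomputable def c0S (lam S : ℝ) : ℝ := Real.sqrt (S ^ 2 - lam)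

lemma fS_pos (hlam : 0 < lam) (hS : 0 < S) {r : ℝ} (hr : c0S lam S < r) :
    0 < fS lam S r :=
  Real.sqrt_pos.2 (inner_term_pos hlam hS hr)

lemma fS_lt_one (hlam : 0 < lam) (hS : 0 < S) (r : ℝ) : fS lam S r < 1 := by
  have h := inner_term_lt_one hS hlam r
  exact (Real.sqrt_lt' one_pos).2 (by simpa using h)

lemma fS_sq (hlam : 0 < lam) (hS : 0 < S) {r : ℝ} (hr : c0S lam S < r) :
    fS lam S r ^ 2 = 1 - S / Real.sqrt (lam + r ^ 2) :=
  Real.sq_sqrt (inner_term_pos hlam hS hr).le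

lemma fS_strictMono (hlam : 0 < lam) (hS : 0 < S) {a b : ℝ}
    (ha : c0S lam S < a) (hab : a < b) : fS lam S a < fS lam S b := by
  have ha0 : 0 ≤ a := le_trans (Real.sqrt_nonneg _) ha.le
  have h1 : Real.sqrt (lam + a ^ 2) < Real.sqrt (lam + b ^ 2) := by
    apply Real.sqrt_lt_sqrt (by positivity)
    nlinarith
  have h2 : S / Real.sqrt (lam + b ^ 2) < S / Real.sqrt (lam + a ^ 2) :=
    div_lt_div_of_pos_left hS (sqrt_lam_pos hlam a) h1
  exact Real.sqrt_lt_sqrt (inner_term_pos hlam hS ha).le (by linarith)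

lemma fS_cont (hlam : 0 < lam) : Continuous (fS lam S) := by
  apply Real.continuous_sqrt.comp
  apply continuous_const.sub
  apply continuous_const.div
  · exact Real.continuous_sqrt.comp (by continuity)
  · intro r; exact (sqrt_lam_pos hlam r).ne'

lemma gS_strictMonoOn (hlam : 0 < lam) (hS : 0 < S) :
    StrictMonoOn (fun r => r * fS lam S r) (Ioi (c0S lam S)) := by
  intro a ha b hb hab
  have ha' : c0S lam S < a := ha
  have ha0 : 0 < a := lt_of_le_of_lt (Real.sqrt_nonneg _) ha'
  have hfa : 0 < fS lam S a := fS_pos hlam hS ha'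
  have hfab : fS lam S a < fS lam S b := fS_strictMono hlam hS ha' hab
  exact mul_lt_mul'' hab hfab ha0.le hfa.le

lemma gS_c0 (hlam : 0 < lam) (hS : 0 < S) :
    c0S lam S * fS lam S (c0S lam S) = 0 := by
  rcases le_or_gt (S ^ 2) lam with h | h
  · have : c0S lam S = 0 := Real.sqrt_eq_zero'.2 (by linarith)
    simp [this]
  · have hc : c0S lam S ^ 2 = S ^ 2 - lam := Real.sq_sqrt (by linarith)
    have : fS lam S (c0S lam S) = 0 := by
      unfold fS
      rw [hc]
      have : lam + (S ^ 2 - lam) = S ^ 2 := by ring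
      rw [this, Real.sqrt_sq hS.le, div_self hS.ne']
      simp
    simp [this]

end NProof

namespace NProof

lemma gS_bijOn (hlam : 0 < lam) (hS : 0 < S) :
    Set.BijOn (fun r => r * fS lam S r) (Ioi (c0S lam S)) (Ioi (0:ℝ)) := by
  have hc0 : 0 ≤ c0S lam S := Real.sqrt_nonneg _
  have hgc : Continuous (fun r => r * fS lam S r) := continuous_id.mul (fS_cont hlam)
  refine ⟨?_, (gS_strictMonoOn hlam hS).injOn, ?_⟩
  · intro r hr
    have hr' : c0S lam S < r := hr
    have hr0 : 0 < r := lt_of_le_of_lt hc0 hr'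
    exact mul_pos hr0 (fS_pos hlam hS hr')
  · intro y hy
    have hy0 : (0:ℝ) < y := hy
    set c := c0S lam S with hc
    have hf1 : 0 < fS lam S (c + 1) := fS_pos hlam hS (by linarith)
    set b := (c + 1) + (y + 1) / fS lam S (c + 1) with hb
    have hgc0 : c * fS lam S c = 0 := by rw [hc]; exact gS_c0 hlam hS
    have hbgt : c + 1 < b := by
      have : 0 < (y + 1) / fS lam S (c + 1) := div_pos (by linarith) hf1
      rw [hb]; linarith
    have hfb : fS lam S (c + 1) < fS lam S b := fS_strictMono hlam hS (by linarith) hbgt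
    have hgb : y < b * fS lam S b := by
      have h1 : (y + 1) / fS lam S (c + 1) < b := by linarith
      have h2 : (y + 1) / fS lam S (c + 1) * fS lam S (c + 1) < b * fS lam S b :=
        mul_lt_mul'' h1 hfb (by positivity) hf1.le
      rw [div_mul_cancel₀ _ hf1.ne'] at h2
      linarith
    have hcb : c ≤ b := by linarith
    have hsub : Set.Icc (c * fS lam S c) (b * fS lam S b) ⊆
        (fun r => r * fS lam S r) '' Set.Icc c b :=
      intermediate_value_Icc hcb hgc.continuousOn
    have hyIcc : y ∈ Set.Icc (c * fS lam S c) (b * fS lam S b) := by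
      rw [hgc0]
      exact ⟨hy0.le, hgb.le⟩
    obtain ⟨x, hx, hgx⟩ := hsub hyIcc
    refine ⟨x, ?_, hgx⟩
    have hxc : c ≤ x := hx.1
    rcases eq_or_lt_of_le hxc with h | h
    · exfalso
      simp only [← h] at hgx
      rw [hgc0] at hgx
      linarith
    · exact h

end NProof

namespace NProof

/-- `q(ρ) = S²/(1-ρ²)² - λ - E²/ρ²`, strictly increasing from `(0,1)` onto `ℝ`. -/
noncomputable def qF (lam S E ρ : ℝ) : ℝ :=
  S ^ 2 / (1 - ρ ^ 2) ^ 2 - lam - E ^ 2 / ρ ^ 2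

variable {lam S E : ℝ}

lemma qF_strictMono (hS : 0 < S) (hE : E ≠ 0) :
    StrictMono (fun ρ : Set.Ioo (0:ℝ) 1 => qF lam S E ρ) := by
  rintro ⟨a, ha0, ha1⟩ ⟨b, hb0, hb1⟩ hab
  have hab' : a < b := hab
  have h1b : (0:ℝ) < 1 - b ^ 2 := by nlinarith
  have h1 : S ^ 2 / (1 - a ^ 2) ^ 2 < S ^ 2 / (1 - b ^ 2) ^ 2 := by
    apply div_lt_div_of_pos_left (by positivity) (by positivity)
    apply pow_lt_pow_left₀ (by nlinarith) h1b.le (by norm_num)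
  have h2 : E ^ 2 / b ^ 2 < E ^ 2 / a ^ 2 := by
    apply div_lt_div_of_pos_left (by positivity) (by positivity)
    exact pow_lt_pow_left₀ hab' ha0.le (by norm_num)
  simp only [qF]
  linarith

lemma qF_contOn (hE : E ≠ 0) : ContinuousOn (qF lam S E) (Set.Ioo (0:ℝ) 1) := by
  apply ContinuousOn.sub
  apply ContinuousOn.sub
  · apply ContinuousOn.div continuousOn_const (by fun_prop)
    rintro ρ ⟨h0, h1⟩
    have : (0:ℝ) < 1 - ρ ^ 2 := by nlinarith
    positivity
  · exact continuousOn_const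
  · apply ContinuousOn.div continuousOn_const (by fun_prop)
    rintro ρ ⟨h0, h1⟩
    positivity

set_option maxHeartbeats 1600000 in
lemma qF_surj (hlam : 0 < lam) (hS : 0 < S) (hE : E ≠ 0) :
    Function.Surjective (fun ρ : Set.Ioo (0:ℝ) 1 => qF lam S E ρ) := by
  intro y
  have hE2 : 0 < E ^ 2 := by positivity
  obtain ⟨T, hT⟩ : ∃ x : ℝ, x = 2 * S ^ 2 + |y| + 1 := ⟨_, rfl⟩
  have hT0 : 0 < T := by rw [hT]; positivity
  obtain ⟨M, hM⟩ : ∃ x : ℝ, x = lam + 4 * E ^ 2 + |y| + 1 := ⟨_, rfl⟩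
  have hM0 : 0 < M := by rw [hM]; positivity
  obtain ⟨ρ₁, hρ₁⟩ : ∃ x : ℝ, x = min (1/2) (|E| / Real.sqrt T) := ⟨_, rfl⟩
  obtain ⟨ρ₂, hρ₂⟩ : ∃ x : ℝ, x = max (1/2) (1 - S / (2 * Real.sqrt M)) := ⟨_, rfl⟩
  have hsqrtT : 0 < Real.sqrt T := Real.sqrt_pos.2 hT0
  have hsqrtM : 0 < Real.sqrt M := Real.sqrt_pos.2 hM0
  have hρ₁pos : 0 < ρ₁ := by
    rw [hρ₁]; exact lt_min (by norm_num) (div_pos (abs_pos.2 hE) hsqrtT)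
  have hρ₁le : ρ₁ ≤ 1/2 := by rw [hρ₁]; exact min_le_left _ _
  have hρ₂ge : 1/2 ≤ ρ₂ := by rw [hρ₂]; exact le_max_left _ _
  have hρ₂lt : ρ₂ < 1 := by
    rw [hρ₂]
    apply max_lt (by norm_num)
    have : 0 < S / (2 * Real.sqrt M) := div_pos hS (by positivity)
    linarith
  have hρ₁₂ : ρ₁ ≤ ρ₂ := le_trans hρ₁le hρ₂ge
  -- q ρ₁ < y
  have hq1 : qF lam S E ρ₁ < y := by
    have h1 : ρ₁ * Real.sqrt T ≤ |E| := by
      have h0 : ρ₁ ≤ |E| / Real.sqrt T := by rw [hρ₁]; exact min_le_right _ _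
      calc ρ₁ * Real.sqrt T ≤ (|E| / Real.sqrt T) * Real.sqrt T :=
            mul_le_mul_of_nonneg_right h0 hsqrtT.le
        _ = |E| := div_mul_cancel₀ _ hsqrtT.ne'
    have h1' : ρ₁ ^ 2 * T ≤ E ^ 2 := by
      have := mul_le_mul h1 h1 (by positivity) (abs_nonneg E)
      have hTT : Real.sqrt T ^ 2 = T := Real.sq_sqrt hT0.le
      nlinarith [sq_abs E]
    have hB : T ≤ E ^ 2 / ρ₁ ^ 2 := by
      rw [le_div_iff₀ (by positivity)]
      linarith [h1']
    have hsq : (1/2:ℝ) ≤ (1 - ρ₁ ^ 2) ^ 2 := by nlinarith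
    have hA : S ^ 2 / (1 - ρ₁ ^ 2) ^ 2 ≤ 2 * S ^ 2 := by
      rw [div_le_iff₀ (by nlinarith)]
      nlinarith [mul_le_mul_of_nonneg_left hsq (by positivity : (0:ℝ) ≤ 2 * S ^ 2)]
    simp only [qF]
    have hy := neg_abs_le y
    rw [hT] at hB
    linarith
  -- q ρ₂ > y
  have hq2 : y < qF lam S E ρ₂ := by
    have hρ₂pos : (0:ℝ) < ρ₂ := by linarith
    have h1ρ₂ : 0 < 1 - ρ₂ ^ 2 := by nlinarith
    have h2 : 1 - ρ₂ ≤ S / (2 * Real.sqrt M) := by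
      have := le_max_right (1/2:ℝ) (1 - S / (2 * Real.sqrt M))
      rw [hρ₂]; linarith
    have h3 : 1 - ρ₂ ^ 2 ≤ S / Real.sqrt M := by
      have h4 : 1 - ρ₂ ^ 2 ≤ 2 * (1 - ρ₂) := by nlinarith
      have h5 : 2 * (S / (2 * Real.sqrt M)) = S / Real.sqrt M := by
        ring
      linarith [mul_le_mul_of_nonneg_left h2 (by norm_num : (0:ℝ) ≤ 2)]
    have h6 : (1 - ρ₂ ^ 2) ^ 2 ≤ S ^ 2 / M := by
      have hdiv : (0:ℝ) ≤ S / Real.sqrt M := (div_pos hS hsqrtM).le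
      have hmul := mul_le_mul h3 h3 h1ρ₂.le hdiv
      have heq : (S / Real.sqrt M) * (S / Real.sqrt M) = S ^ 2 / M := by
        rw [div_mul_div_comm, Real.mul_self_sqrt hM0.le, ← sq]
      calc (1 - ρ₂ ^ 2) ^ 2 = (1 - ρ₂ ^ 2) * (1 - ρ₂ ^ 2) := by ring
        _ ≤ (S / Real.sqrt M) * (S / Real.sqrt M) := hmul
        _ = S ^ 2 / M := heq
    have hA : M ≤ S ^ 2 / (1 - ρ₂ ^ 2) ^ 2 := by
      rw [le_div_iff₀ (pow_pos h1ρ₂ 2)]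
      calc M * (1 - ρ₂ ^ 2) ^ 2 ≤ M * (S ^ 2 / M) :=
            mul_le_mul_of_nonneg_left h6 hM0.le
        _ = S ^ 2 := by field_simp
    have hB : E ^ 2 / ρ₂ ^ 2 ≤ 4 * E ^ 2 := by
      rw [div_le_iff₀ (pow_pos hρ₂pos 2)]
      have h14 : (1:ℝ) ≤ 4 * ρ₂ ^ 2 := by nlinarith
      nlinarith [mul_le_mul_of_nonneg_left h14 hE2.le]
    simp only [qF]
    have hy := le_abs_self y
    rw [hM] at hA
    linarith
  -- intermediate value
  have hsub : Set.Icc (qF lam S E ρ₁) (qF lam S E ρ₂) ⊆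
      qF lam S E '' Set.Icc ρ₁ ρ₂ := by
    apply intermediate_value_Icc hρ₁₂
    apply (qF_contOn hE).mono
    intro x hx
    exact ⟨lt_of_lt_of_le hρ₁pos hx.1, lt_of_le_of_lt hx.2 hρ₂lt⟩
  obtain ⟨ρ, hρmem, hρeq⟩ := hsub ⟨hq1.le, hq2.le⟩
  exact ⟨⟨ρ, lt_of_lt_of_le hρ₁pos hρmem.1, lt_of_le_of_lt hρmem.2 hρ₂lt⟩, hρeq⟩

end NProof

namespace NProof

variable (lam S E : ℝ)

noncomputable def qIso (hlam : 0 < lam) (hS : 0 < S) (hE : E ≠ 0) :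
    Set.Ioo (0:ℝ) 1 ≃o ℝ :=
  StrictMono.orderIsoOfSurjective _ (qF_strictMono hS hE) (qF_surj hlam hS hE)

variable {lam S E}

lemma qIso_apply (hlam : 0 < lam) (hS : 0 < S) (hE : E ≠ 0) (a : Set.Ioo (0:ℝ) 1) :
    qIso lam S E hlam hS hE a = qF lam S E a := by
  rw [qIso, StrictMono.coe_orderIsoOfSurjective]

/-- `ρ(t)`: the unique `ρ ∈ (0,1)` with `q(ρ) = t`. -/
noncomputable def rhoF (hlam : 0 < lam) (hS : 0 < S) (hE : E ≠ 0) (t : ℝ) : ℝ :=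
  ((qIso lam S E hlam hS hE).symm t : ℝ)

lemma rhoF_mem (hlam : 0 < lam) (hS : 0 < S) (hE : E ≠ 0) (t : ℝ) :
    rhoF hlam hS hE t ∈ Set.Ioo (0:ℝ) 1 :=
  ((qIso lam S E hlam hS hE).symm t).2

lemma qF_rhoF (hlam : 0 < lam) (hS : 0 < S) (hE : E ≠ 0) (t : ℝ) :
    qF lam S E (rhoF hlam hS hE t) = t := by
  have := (qIso lam S E hlam hS hE).apply_symm_apply t
  rwa [qIso_apply] at this

lemma rhoF_eq (hlam : 0 < lam) (hS : 0 < S) (hE : E ≠ 0) {ρ t : ℝ}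
    (hρ : ρ ∈ Set.Ioo (0:ℝ) 1) (h : qF lam S E ρ = t) : rhoF hlam hS hE t = ρ := by
  have h2 : (qIso lam S E hlam hS hE).symm t = ⟨ρ, hρ⟩ := by
    rw [OrderIso.symm_apply_eq, qIso_apply, h]
  rw [rhoF, h2]

lemma rhoF_cont (hlam : 0 < lam) (hS : 0 < S) (hE : E ≠ 0) :
    Continuous (rhoF hlam hS hE) :=
  continuous_subtype_val.comp (qIso lam S E hlam hS hE).toHomeomorph.symm.continuous


open scoped RealInnerProductSpace

abbrev EE := EuclideanSpace ℝ (Fin 3)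

variable {lam C D E : ℝ}

/-- All the facts we need about points of `N`. -/
lemma mem_facts (hlam : 0 < lam) (hC : 0 < C) (hD : 0 < D) (hE : E ≠ 0)
    {p : EE × EE} (hp : p ∈ NSetE lam C D E) :
    p.1 ≠ 0 ∧ p.2 ≠ 0 ∧ ‖p.1‖ = fCD lam C D ‖p.2‖ ∧ 0 < ‖p.1‖ ∧ ‖p.1‖ < 1 ∧
      lam + ‖p.2‖ ^ 2 = (Real.sqrt C + Real.sqrt D) ^ 2 / (1 - ‖p.1‖ ^ 2) ^ 2 ∧
      ⟪p.1, p.2⟫ = E := by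
  obtain ⟨hvw, heq⟩ := hp
  have hS : 0 < Real.sqrt C + Real.sqrt D :=
    add_pos_of_pos_of_nonneg (Real.sqrt_pos.2 hC) (Real.sqrt_nonneg D)
  have hv : p.1 ≠ 0 := by
    intro h; rw [h] at hvw; simp at hvw; exact hE hvw.symm
  have hw : p.2 ≠ 0 := by
    intro h; rw [h] at hvw; simp at hvw; exact hE hvw.symm
  have hsq : 0 < Real.sqrt (lam + ‖p.2‖ ^ 2) := sqrt_lam_pos hlam _
  have h1v : 1 - ‖p.1‖ ^ 2 =
      (Real.sqrt C + Real.sqrt D) / Real.sqrt (lam + ‖p.2‖ ^ 2) :=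
    (eq_div_iff hsq.ne').2 heq
  have h1vpos : 0 < 1 - ‖p.1‖ ^ 2 := by rw [h1v]; exact div_pos hS hsq
  have hnv0 : 0 < ‖p.1‖ := norm_pos_iff.2 hv
  have hnv1 : ‖p.1‖ < 1 := by nlinarith [norm_nonneg p.1]
  have h3 : ‖p.1‖ = fCD lam C D ‖p.2‖ := by
    unfold fCD
    have h4 : 1 - (Real.sqrt C + Real.sqrt D) / Real.sqrt (lam + ‖p.2‖ ^ 2) =
        ‖p.1‖ ^ 2 := by rw [← h1v]; ring
    rw [h4, Real.sqrt_sq (norm_nonneg _)]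
  have h6 : Real.sqrt (lam + ‖p.2‖ ^ 2) =
      (Real.sqrt C + Real.sqrt D) / (1 - ‖p.1‖ ^ 2) := by
    rw [eq_div_iff h1vpos.ne', mul_comm]; exact heq
  have h5 : lam + ‖p.2‖ ^ 2 =
      (Real.sqrt C + Real.sqrt D) ^ 2 / (1 - ‖p.1‖ ^ 2) ^ 2 := by
    have := Real.sq_sqrt (by positivity : (0:ℝ) ≤ lam + ‖p.2‖ ^ 2)
    rw [← this, h6, div_pow]
  exact ⟨hv, hw, h3, hnv0, hnv1, h5, hvw⟩

/-- The forward map `Φ`. -/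
noncomputable def phiFun (E : ℝ) : EE × EE → EE × EE :=
  fun p => (‖p.1‖⁻¹ • p.1, p.2 - (E / ‖p.1‖ ^ 2) • p.1)

/-- The inverse map `Ψ`. -/
noncomputable def psiFun (E : ℝ) {lam S : ℝ} (hlam : 0 < lam) (hS : 0 < S)
    (hE : E ≠ 0) : EE × EE → EE × EE :=
  fun p => ((rhoF hlam hS hE (‖p.2‖ ^ 2)) • p.1,
    p.2 + (E / rhoF hlam hS hE (‖p.2‖ ^ 2)) • p.1)

lemma phi_mem (hlam : 0 < lam) (hC : 0 < C) (hD : 0 < D) (hE : E ≠ 0)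
    {p : EE × EE} (hp : p ∈ NSetE lam C D E) : phiFun E p ∈ TS2 := by
  obtain ⟨hv, hw, h3, hnv0, hnv1, h5, hvw⟩ := mem_facts hlam hC hD hE hp
  constructor
  · show ‖‖p.1‖⁻¹ • p.1‖ = 1
    rw [norm_smul, norm_inv, norm_norm, inv_mul_cancel₀ hnv0.ne']
  · show ⟪‖p.1‖⁻¹ • p.1, p.2 - (E / ‖p.1‖ ^ 2) • p.1⟫ = 0
    rw [real_inner_smul_left, inner_sub_right, real_inner_smul_right, hvw,
      real_inner_self_eq_norm_sq]
    field_simp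
    simp

lemma psi_mem (hlam : 0 < lam) (hC : 0 < C) (hD : 0 < D)
    (hS : 0 < Real.sqrt C + Real.sqrt D) (hE : E ≠ 0)
    {p : EE × EE} (hp : p ∈ TS2) : psiFun E hlam hS hE p ∈ NSetE lam C D E := by
  obtain ⟨hu, hux⟩ := hp
  obtain ⟨hρ0, hρ1⟩ := rhoF_mem hlam hS hE (‖p.2‖ ^ 2)
  have hq := qF_rhoF hlam hS hE (‖p.2‖ ^ 2)
  set ρ := rhoF hlam hS hE (‖p.2‖ ^ 2) with hρdef
  have h1ρ : 0 < 1 - ρ ^ 2 := by nlinarith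
  constructor
  · show ⟪ρ • p.1, p.2 + (E / ρ) • p.1⟫ = E
    rw [real_inner_smul_left, inner_add_right, real_inner_smul_right, hux,
      real_inner_self_eq_norm_sq, hu]
    field_simp
    simp
  · show (1 - ‖ρ • p.1‖ ^ 2) * Real.sqrt (lam + ‖p.2 + (E / ρ) • p.1‖ ^ 2) =
      Real.sqrt C + Real.sqrt D
    have hnv : ‖ρ • p.1‖ = ρ := by
      rw [norm_smul, hu, mul_one, Real.norm_eq_abs, abs_of_pos hρ0]
    have hxu : ⟪p.2, p.1⟫ = (0:ℝ) := by rw [real_inner_comm]; exact hux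
    have hnw : ‖p.2 + (E / ρ) • p.1‖ ^ 2 = ‖p.2‖ ^ 2 + E ^ 2 / ρ ^ 2 := by
      rw [norm_add_sq_real, real_inner_smul_right, hxu, norm_smul, hu, mul_one,
        Real.norm_eq_abs]
      rw [mul_zero]
      have : |E / ρ| ^ 2 = E ^ 2 / ρ ^ 2 := by rw [sq_abs, div_pow]
      rw [this]; ring
    rw [hnv, hnw]
    have hlw : lam + (‖p.2‖ ^ 2 + E ^ 2 / ρ ^ 2) =
        (Real.sqrt C + Real.sqrt D) ^ 2 / (1 - ρ ^ 2) ^ 2 := by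
      have : qF lam (Real.sqrt C + Real.sqrt D) E ρ = ‖p.2‖ ^ 2 := hq
      unfold qF at this
      linarith
    rw [hlw, ← div_pow,
      Real.sqrt_sq (div_nonneg hS.le h1ρ.le)]
    field_simp

lemma psi_phi (hlam : 0 < lam) (hC : 0 < C) (hD : 0 < D)
    (hS : 0 < Real.sqrt C + Real.sqrt D) (hE : E ≠ 0)
    {p : EE × EE} (hp : p ∈ NSetE lam C D E) :
    psiFun E hlam hS hE (phiFun E p) = p := by
  obtain ⟨hv, hw, h3, hnv0, hnv1, h5, hvw⟩ := mem_facts hlam hC hD hE hp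
  have hwv : ⟪p.2, p.1⟫ = E := by rw [real_inner_comm]; exact hvw
  have hx : ‖p.2 - (E / ‖p.1‖ ^ 2) • p.1‖ ^ 2 = ‖p.2‖ ^ 2 - E ^ 2 / ‖p.1‖ ^ 2 := by
    rw [norm_sub_sq_real, real_inner_smul_right, hwv, norm_smul,
      Real.norm_eq_abs]
    have h1 : |E / ‖p.1‖ ^ 2| ^ 2 = E ^ 2 / ‖p.1‖ ^ 4 := by
      rw [sq_abs, div_pow]; ring
    rw [mul_pow, h1]
    field_simp
    ring
  have hqv : qF lam (Real.sqrt C + Real.sqrt D) E ‖p.1‖ =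
      ‖p.2 - (E / ‖p.1‖ ^ 2) • p.1‖ ^ 2 := by
    rw [hx]; unfold qF; linarith
  have hρ : rhoF hlam hS hE (‖p.2 - (E / ‖p.1‖ ^ 2) • p.1‖ ^ 2) = ‖p.1‖ :=
    rhoF_eq hlam hS hE ⟨hnv0, hnv1⟩ hqv
  have hstep : psiFun E hlam hS hE (phiFun E p) =
      ((rhoF hlam hS hE (‖p.2 - (E / ‖p.1‖ ^ 2) • p.1‖ ^ 2)) • (‖p.1‖⁻¹ • p.1),
        (p.2 - (E / ‖p.1‖ ^ 2) • p.1) +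
          (E / rhoF hlam hS hE (‖p.2 - (E / ‖p.1‖ ^ 2) • p.1‖ ^ 2)) •
            (‖p.1‖⁻¹ • p.1)) := rfl
  rw [hstep, hρ]
  have h1 : ‖p.1‖ • ‖p.1‖⁻¹ • p.1 = p.1 := by
    rw [smul_smul, mul_inv_cancel₀ hnv0.ne', one_smul]
  have h2 : (E / ‖p.1‖) • ‖p.1‖⁻¹ • p.1 = (E / ‖p.1‖ ^ 2) • p.1 := by
    rw [smul_smul]
    congr 1
    rw [← div_eq_mul_inv, div_div, ← pow_two]
  rw [h1, h2, sub_add_cancel]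

lemma phi_psi (hlam : 0 < lam) (hC : 0 < C) (hD : 0 < D)
    (hS : 0 < Real.sqrt C + Real.sqrt D) (hE : E ≠ 0)
    {p : EE × EE} (hp : p ∈ TS2) : phiFun E (psiFun E hlam hS hE p) = p := by
  obtain ⟨hu, hux⟩ := hp
  obtain ⟨hρ0, hρ1⟩ := rhoF_mem hlam hS hE (‖p.2‖ ^ 2)
  set ρ := rhoF hlam hS hE (‖p.2‖ ^ 2) with hρdef
  have hnv : ‖ρ • p.1‖ = ρ := by
    rw [norm_smul, hu, mul_one, Real.norm_eq_abs, abs_of_pos hρ0]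
  have hstep : phiFun E (psiFun E hlam hS hE p) =
      (‖ρ • p.1‖⁻¹ • (ρ • p.1),
        (p.2 + (E / ρ) • p.1) - (E / ‖ρ • p.1‖ ^ 2) • (ρ • p.1)) := rfl
  rw [hstep, hnv]
  have h1 : ρ⁻¹ • ρ • p.1 = p.1 := by
    rw [smul_smul, inv_mul_cancel₀ hρ0.ne', one_smul]
  have h2 : (E / ρ ^ 2) • ρ • p.1 = (E / ρ) • p.1 := by
    rw [smul_smul]
    congr 1
    rw [pow_two, ← div_div, div_mul_cancel₀ _ hρ0.ne']
  rw [h1, h2, add_sub_cancel_right]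


lemma cont_phi (hlam : 0 < lam) (hC : 0 < C) (hD : 0 < D) (hE : E ≠ 0) :
    Continuous (fun p : NSetE lam C D E => phiFun E p.1) := by
  have hc1 : Continuous (fun p : NSetE lam C D E => (p : EE × EE).1) :=
    continuous_subtype_val.fst
  have hc2 : Continuous (fun p : NSetE lam C D E => (p : EE × EE).2) :=
    continuous_subtype_val.snd
  have hn : Continuous (fun p : NSetE lam C D E => ‖(p : EE × EE).1‖) := hc1.norm
  have hne : ∀ p : NSetE lam C D E, ‖(p : EE × EE).1‖ ≠ 0 := fun p =>
    (norm_pos_iff.2 (mem_facts hlam hC hD hE p.2).1).ne'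
  apply Continuous.prodMk
  · exact (hn.inv₀ hne).smul hc1
  · exact hc2.sub ((continuous_const.div (hn.pow 2)
      (fun p => pow_ne_zero 2 (hne p))).smul hc1)

lemma cont_psi (hlam : 0 < lam) (hS : 0 < Real.sqrt C + Real.sqrt D)
    (hE : E ≠ 0) :
    Continuous (fun p : TS2 => psiFun E hlam hS hE p.1) := by
  have hc1 : Continuous (fun p : TS2 => (p : EE × EE).1) :=
    continuous_subtype_val.fst
  have hc2 : Continuous (fun p : TS2 => (p : EE × EE).2) :=
    continuous_subtype_val.snd
  have hρ : Continuous (fun p : TS2 => rhoF hlam hS hE (‖(p : EE × EE).2‖ ^ 2)) :=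
    (rhoF_cont hlam hS hE).comp (hc2.norm.pow 2)
  have hρne : ∀ p : TS2, rhoF hlam hS hE (‖(p : EE × EE).2‖ ^ 2) ≠ 0 := fun p =>
    (rhoF_mem hlam hS hE _).1.ne'
  apply Continuous.prodMk
  · exact hρ.smul hc1
  · exact hc2.add ((continuous_const.div hρ hρne).smul hc1)

lemma homeo_part (hlam : 0 < lam) (hC : 0 < C) (hD : 0 < D) (hE : E ≠ 0) :
    ∃ h : NSetE lam C D E ≃ₜ TS2,
      ∀ p : NSetE lam C D E,
        (h p : EE × EE) =
          (‖p.val.1‖⁻¹ • p.val.1, p.val.2 - (E / ‖p.val.1‖ ^ 2) • p.val.1) := by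
  have hS : 0 < Real.sqrt C + Real.sqrt D :=
    add_pos_of_pos_of_nonneg (Real.sqrt_pos.2 hC) (Real.sqrt_nonneg D)
  refine ⟨⟨⟨fun p => ⟨phiFun E p.1, phi_mem hlam hC hD hE p.2⟩,
    fun p => ⟨psiFun E hlam hS hE p.1, psi_mem hlam hC hD hS hE p.2⟩,
    fun p => Subtype.ext (psi_phi hlam hC hD hS hE p.2),
    fun p => Subtype.ext (phi_psi hlam hC hD hS hE p.2)⟩,
    Continuous.subtype_mk (cont_phi hlam hC hD hE) _,
    Continuous.subtype_mk (cont_psi hlam hS hE) _⟩,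
    fun p => rfl⟩

end NProof

/-- For `E ≠ 0`: every `(v,w) ∈ N` has `v ≠ 0`, `w ≠ 0`, `|v| = f(|w|)`; `r ↦ r f(r)` is a
strictly increasing bijection from `(c₀,∞)` onto `(0,∞)`; and
`Φ(v,w) = (v/|v|, w - (E/|v|²)v)` is a homeomorphism from `N` onto `TS²`. -/
theorem NSetE_homeo_TS2 (lam C D E : ℝ) (hlam : 0 < lam) (hC : 0 < C) (hD : 0 < D)
    (hE : E ≠ 0) :
    (∀ p ∈ NSetE lam C D E, p.1 ≠ 0 ∧ p.2 ≠ 0 ∧ ‖p.1‖ = fCD lam C D ‖p.2‖) ∧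
    StrictMonoOn (fun r => r * fCD lam C D r) (Set.Ioi (cZero lam C D)) ∧
    Set.BijOn (fun r => r * fCD lam C D r) (Set.Ioi (cZero lam C D)) (Set.Ioi 0) ∧
    ∃ h : NSetE lam C D E ≃ₜ TS2,
      ∀ p : NSetE lam C D E,
        (h p : EuclideanSpace ℝ (Fin 3) × EuclideanSpace ℝ (Fin 3)) =
          (‖p.val.1‖⁻¹ • p.val.1, p.val.2 - (E / ‖p.val.1‖ ^ 2) • p.val.1) := by
  have hS : 0 < Real.sqrt C + Real.sqrt D :=
    add_pos_of_pos_of_nonneg (Real.sqrt_pos.2 hC) (Real.sqrt_nonneg D)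
  refine ⟨fun p hp => ?_, ?_, ?_, ?_⟩
  · obtain ⟨hv, hw, h3, _⟩ := NProof.mem_facts hlam hC hD hE hp
    exact ⟨hv, hw, h3⟩
  · exact NProof.gS_strictMonoOn hlam hS
  · exact NProof.gS_bijOn hlam hS
  · exact NProof.homeo_part hlam hC hD hE
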